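/- With capped weights w'_{i,t} = min{w_{i,t}, (1−σ_t)α_t} and allocation p_{i,t} = σ_t + (k − Kσ_t)·w'_{i,t}/(∑_j w'_{j,t}), choosing α_t = min_i { w_{i,t}/(1−σ_t) } guarantees p_{i,t} ≤ 1 for every i ∈ {1,…,K}. -/
import Mathlib


theorem e3cs_capping_min_alpha_no_overflow (K k : ℕ) (hK : 0 < K) (hkK : k ≤ K)
    (σ : ℝ) (hσ0 : 0 ≤ σ) (hσ1 : σ < 1) (hσk : (K : ℝ) * σ ≤ k)
    (w : Fin K → ℝ) (hw : ∀ i, 0 < w i)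
    (α : ℝ)
    (hα : α = Finset.univ.inf'
      (Finset.univ_nonempty_iff.mpr (Fin.pos_iff_nonempty.mp hK))
      (fun i => w i / (1 - σ)))
    (w' p : Fin K → ℝ)
    (hw' : ∀ i, w' i = min (w i) ((1 - σ) * α))
    (hp : ∀ i, p i = σ + ((k : ℝ) - K * σ) * w' i / ∑ j, w' j) :
    ∀ i, p i ≤ 1 := by
  have h1σ : (0:ℝ) < 1 - σ := by linarith
  have hαle : ∀ i, α ≤ w i / (1 - σ) := by
    intro i
    rw [hα]
    exact Finset.inf'_le _ (Finset.mem_univ i)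
  have hαpos : 0 < α := by
    rw [hα]
    rw [Finset.lt_inf'_iff]
    intro i _
    exact div_pos (hw i) h1σ
  have hw'eq : ∀ i, w' i = (1 - σ) * α := by
    intro i
    rw [hw' i, min_eq_right]
    rw [mul_comm]
    exact (le_div_iff₀ h1σ).mp (hαle i)
  have hsum : ∑ j, w' j = (K : ℝ) * ((1 - σ) * α) := by
    simp [hw'eq, Finset.sum_const, Finset.card_univ]
  intro i
  rw [hp i, hw'eq i, hsum]
  have hKpos : (0:ℝ) < K := by exact_mod_cast hK
  have hne : (1 - σ) * α ≠ 0 := ne_of_gt (mul_pos h1σ hαpos)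
  have key : ((k:ℝ) - K * σ) * ((1 - σ) * α) / ((K:ℝ) * ((1 - σ) * α)) = ((k:ℝ) - K * σ) / K := by
    field_simp
  rw [key]
  have hkK' : (k:ℝ) ≤ K := by exact_mod_cast hkK
  have h2 : ((k:ℝ) - K * σ) / K ≤ 1 - σ := by
    rw [div_le_iff₀ hKpos]
    nlinarith
  linarith
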